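/- Let R be a commutative ring, I an ideal of R, and d₁, …, dₙ derivations of R each satisfying d_j(I) ⊆ I. Then for all x, y ∈ R with x·y ∈ I, one has x^(n+1) · (d₁ ∘ ⋯ ∘ dₙ)(y) ∈ I. -/

import Mathlib

/-- The composition `d₁ ∘ ⋯ ∘ dₙ` of a finite list of derivations of `R`
(the empty list giving the identity map of `R`). -/
def List.derComp {R : Type*} [CommRing R] (l : List (Derivation ℤ R R)) : R → R :=
  l.foldr (fun (d : Derivation ℤ R R) (f : R → R) => ⇑d ∘ f) id

@[simp]
theorem List.derComp_nil {R : Type*} [CommRing R] : ([] : List (Derivation ℤ R R)).derComp = id :=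
  rfl

@[simp]
theorem List.derComp_cons {R : Type*} [CommRing R] (d : Derivation ℤ R R)
    (l : List (Derivation ℤ R R)) (y : R) : (d :: l).derComp y = d (l.derComp y) :=
  rfl

theorem Derivation.mul_map_pow {R A : Type*} [CommSemiring R] [CommRing A] [Algebra R A]
    (d : Derivation R A A) (x : A) (k : ℕ) : x * d (x ^ k) = k * x ^ k * d x := by
  rcases k with _ | k
  · simp
  · rw [Derivation.leibniz_pow, Nat.add_sub_cancel, nsmul_eq_mul, smul_eq_mul]
    ring

/-- Each further derivation costs one more factor of `x`, because
`x * d (x ^ k * z) = x ^ (k + 1) * d z + k * d x * (x ^ k * z)`. -/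
theorem Ideal.pow_succ_mul_derivation_mem {R A : Type*} [CommSemiring R] [CommRing A]
    [Algebra R A] {I : Ideal A} {d : Derivation R A A} (hI : ∀ a ∈ I, d a ∈ I) {x z : A}
    {k : ℕ} (h : x ^ k * z ∈ I) : x ^ (k + 1) * d z ∈ I := by
  have hleibniz : x ^ (k + 1) * d z = x * d (x ^ k * z) - k * d x * (x ^ k * z) := by
    rw [Derivation.leibniz, smul_eq_mul, smul_eq_mul, mul_add, ← mul_assoc x z,
      mul_comm x z, mul_assoc z, Derivation.mul_map_pow]
    ring
  rw [hleibniz]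
  exact I.sub_mem (I.mul_mem_left x (hI _ h)) (I.mul_mem_left _ h)

/-- If `I` is an ideal stable under each of the derivations `d₁, …, dₙ`, and
`x * y ∈ I`, then `x ^ (n + 1) * (d₁ ∘ ⋯ ∘ dₙ)(y) ∈ I`. -/
theorem stmt_2 {R : Type*} [CommRing R] (I : Ideal R)
    (l : List (Derivation ℤ R R)) (hl : ∀ d ∈ l, ∀ a ∈ I, d a ∈ I)
    (x y : R) (hxy : x * y ∈ I) :
    x ^ (l.length + 1) * l.derComp y ∈ I := by
  induction l with
  | nil => simpa only [List.length_nil, zero_add, pow_one, List.derComp_nil, id_eq] using hxy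
  | cons d l ih =>
    rw [List.length_cons, List.derComp_cons]
    exact I.pow_succ_mul_derivation_mem (hl d List.mem_cons_self)
      (ih fun d' hd' => hl d' (List.mem_cons_of_mem d hd'))
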